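/- (Network dynamic regret bound for D-ODWDA.) Let n ≥ 1, T ≥ 1, β > 0, and α = β/T. Let P ∈ ℝ^{n×n} be row-stochastic with stationary distribution π ∈ (0,1)^n (π = πP, Σ_i π_i = 1), and suppose there exist γ ∈ (0,1) and an integer ν ≥ 1 such that |(P^k)_{ij} − π_j| ≤ γ^{⌊k/ν⌋} for all integers k ≥ 1 and all i,j. Let X ⊆ ℝ^m be nonempty, compact, and convex, and let ψ: ℝ^m → ℝ be 1-strongly convex with respect to ‖·‖. For t = 1,…,T+1 and i = 1,…,n, let f_{i,t}: ℝ^m → ℝ be convex and differentiable with ‖∇f_{i,t}(x)‖_* ≤ L for all x ∈ X, and set f_t(x) = (1/n)Σ_{i=1}^n f_{i,t}(x). Generate iterates by y_{i,0} = 0, x_{i,0} ∈ X, y_{i,t+1} = Σ_{j=1}^n P_{ij} y_{j,t} + ∇f_{i,t}(x_{i,t}), and x_{i,t+1} = Π(y_{i,t+1}, α), and set ȳ_t = Σ_{i=1}^n π_i y_{i,t}. For each t = 1,…,T+1 let x*_t ∈ X be a minimizer of f_t over X, and suppose: (i) there is D ≥ 0 with ‖ȳ_t‖_* ≤ D for all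 t = 1,…,T; (ii) there is Y ≥ 0 such that for every i and every t = 2,…,T+1 there exists y*_{i,t} ∈ ℝ^m with x*_t = Π(y*_{i,t}, α) and ‖y*_{i,t}‖_* ≤ Y. Then the network dynamic regret R_T = Σ_{t=1}^T ((1/n)Σ_{i=1}^n f_{i,t}(x_{i,t}) − f_t(x*_t)) satisfies R_T ≤ βL²(n/(γ(1 − γ^{1/ν})) + 2) + βL(D + Y) + L·V_T, where V_T = Σ_{t=1}^T ‖x*_{t+1} − x*_t‖. -/

import Mathlib

/-!
By strong convexity of `ψ`, the regularized projection is `α`-Lipschitz from the dual norm to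
`N`. Unrolling the recursion, `y_{i,t} - ȳ_t` is a sum of gradients weighted by
`(P^k)_{ij} - π_j`, so geometric mixing bounds its dual norm by
`C = L (n / (γ (1 - γ^{1/ν})) + 2)`. Hence `x_{i,t} = Π(y_{i,t})` and `x*_t = Π(y*_{i,t})` are
`N`-close, within `α (C + D + Y)`, and the gradient inequality bounds each round's regret by
`α L (C + D + Y)`; summing with `α T = β` gives the claim. Round 1 is compared with `x*_2`
instead, since `x*_1` has no dual representative, which costs `L N(x*_2 - x*_1) ≤ L V_T`.
-/

open Finset Filter Topology
open scoped RealInnerProductSpace Matrix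

/-- A norm given as a bare function, since `E` already carries its own norm instance. -/
structure IsNorm {E : Type*} [AddCommGroup E] [Module ℝ E] (N : E → ℝ) : Prop where
  add_le : ∀ a b, N (a + b) ≤ N a + N b
  smul : ∀ (c : ℝ) a, N (c • a) = |c| * N a
  eq_zero_iff : ∀ a, N a = 0 ↔ a = 0

namespace IsNorm

section Module

variable {E : Type*} [AddCommGroup E] [Module ℝ E] {N : E → ℝ} (hN : IsNorm N)
include hN

def toSeminorm : Seminorm ℝ E := Seminorm.of N hN.add_le hN.smul

theorem nonneg (a : E) : 0 ≤ N a := apply_nonneg hN.toSeminorm a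

theorem zero : N 0 = 0 := map_zero hN.toSeminorm

theorem neg (a : E) : N (-a) = N a := map_neg_eq_map hN.toSeminorm a

theorem sub_comm (a b : E) : N (a - b) = N (b - a) := map_sub_rev hN.toSeminorm a b

theorem pos {a : E} (ha : a ≠ 0) : 0 < N a :=
  (hN.nonneg a).lt_of_ne' (mt (hN.eq_zero_iff a).1 ha)

end Module

variable {E : Type*} [NormedAddCommGroup E] [NormedSpace ℝ E] [FiniteDimensional ℝ E]
  {N : E → ℝ} (hN : IsNorm N)
include hN

theorem continuous : Continuous N :=
  hN.toSeminorm.convexOn.locallyLipschitz.continuous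

theorem exists_pos_mul_norm_le : ∃ c > 0, ∀ a : E, c * ‖a‖ ≤ N a := by
  rcases subsingleton_or_nontrivial E with hE | hE
  · exact ⟨1, one_pos, fun a => by simp [Subsingleton.elim a 0, hN.zero]⟩
  obtain ⟨z, hz, hmin⟩ := (isCompact_sphere (0 : E) 1).exists_isMinOn
    (NormedSpace.sphere_nonempty.2 zero_le_one) hN.continuous.continuousOn
  refine ⟨N z, hN.pos (ne_zero_of_mem_unit_sphere ⟨z, hz⟩), fun a => ?_⟩
  rcases eq_or_ne a 0 with rfl | ha
  · simp [hN.zero]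
  have hle : N z ≤ N (‖a‖⁻¹ • a) := hmin (by simp [norm_smul, ha])
  rw [hN.smul, abs_inv, abs_norm, le_inv_mul_iff₀ (norm_pos_iff.2 ha)] at hle
  linarith

end IsNorm

section DualNorm

variable {E : Type*} [NormedAddCommGroup E] [InnerProductSpace ℝ E]

/-- Only meaningful when the set is bounded above (`IsNorm.bddAbove_inner`); otherwise `sSup`
returns the junk value `0`. -/
noncomputable def dualNorm (N : E → ℝ) (v : E) : ℝ :=
  sSup {r : ℝ | ∃ a, N a ≤ 1 ∧ r = ⟪v, a⟫}

namespace IsNorm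

variable {N : E → ℝ} (hN : IsNorm N)
include hN

theorem dualNorm_le {v : E} {C : ℝ} (h : ∀ a, N a ≤ 1 → ⟪v, a⟫ ≤ C) : dualNorm N v ≤ C :=
  csSup_le ⟨0, 0, by simp [hN.zero], by simp⟩ (by rintro _ ⟨a, ha, rfl⟩; exact h a ha)

variable [FiniteDimensional ℝ E]

theorem bddAbove_inner (v : E) : BddAbove {r : ℝ | ∃ a, N a ≤ 1 ∧ r = ⟪v, a⟫} := by
  obtain ⟨c, hc, hcN⟩ := hN.exists_pos_mul_norm_le
  refine ⟨‖v‖ / c, ?_⟩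
  rintro _ ⟨a, ha, rfl⟩
  have ha' : ‖a‖ ≤ 1 / c := by rw [le_div_iff₀ hc]; linarith [hcN a]
  calc ⟪v, a⟫ ≤ ‖v‖ * ‖a‖ := real_inner_le_norm v a
    _ ≤ ‖v‖ * (1 / c) := by gcongr
    _ = ‖v‖ / c := by ring

theorem inner_le_dualNorm (v : E) {a : E} (ha : N a ≤ 1) : ⟪v, a⟫ ≤ dualNorm N v :=
  le_csSup (hN.bddAbove_inner v) ⟨a, ha, rfl⟩

theorem abs_inner_le_dualNorm (v : E) {a : E} (ha : N a ≤ 1) : |⟪v, a⟫| ≤ dualNorm N v := by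
  have h := hN.inner_le_dualNorm v (a := -a) (by rwa [hN.neg])
  rw [inner_neg_right] at h
  exact abs_le.2 ⟨by linarith, hN.inner_le_dualNorm v ha⟩

theorem dualNorm_nonneg (v : E) : 0 ≤ dualNorm N v := by
  simpa using hN.inner_le_dualNorm v (a := 0) (by simp [hN.zero])

theorem dualNorm_zero : dualNorm N (0 : E) = 0 :=
  le_antisymm (hN.dualNorm_le fun a _ => by simp) (hN.dualNorm_nonneg 0)

theorem inner_le_dualNorm_mul (v w : E) : ⟪v, w⟫ ≤ dualNorm N v * N w := by
  rcases eq_or_ne w 0 with rfl | hw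
  · simp [hN.zero]
  have hNw := hN.pos hw
  have h := hN.inner_le_dualNorm v (a := (N w)⁻¹ • w)
    (by rw [hN.smul, abs_inv, abs_of_pos hNw, inv_mul_cancel₀ hNw.ne'])
  rw [real_inner_smul_right, inv_mul_le_iff₀ hNw] at h
  linarith

theorem dualNorm_add_le (u v : E) : dualNorm N (u + v) ≤ dualNorm N u + dualNorm N v :=
  hN.dualNorm_le fun a ha => by
    rw [inner_add_left]
    exact add_le_add (hN.inner_le_dualNorm u ha) (hN.inner_le_dualNorm v ha)

theorem dualNorm_neg (v : E) : dualNorm N (-v) = dualNorm N v := by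
  have key : ∀ w : E, dualNorm N (-w) ≤ dualNorm N w := fun w =>
    hN.dualNorm_le fun a ha => by
      simpa [inner_neg_left, inner_neg_right] using
        hN.inner_le_dualNorm w (a := -a) (by rwa [hN.neg])
  exact le_antisymm (key v) (by simpa using key (-v))

theorem dualNorm_sub_le (u v : E) : dualNorm N (u - v) ≤ dualNorm N u + dualNorm N v := by
  simpa [sub_eq_add_neg, hN.dualNorm_neg] using hN.dualNorm_add_le u (-v)

theorem dualNorm_sum_le {ι : Type*} (s : Finset ι) (v : ι → E) :
    dualNorm N (∑ i ∈ s, v i) ≤ ∑ i ∈ s, dualNorm N (v i) :=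
  le_sum_of_subadditive _ hN.dualNorm_zero.le hN.dualNorm_add_le s v

theorem dualNorm_sum_smul_le {ι : Type*} (s : Finset ι) (c : ι → ℝ) (v : ι → E) :
    dualNorm N (∑ i ∈ s, c i • v i) ≤ ∑ i ∈ s, |c i| * dualNorm N (v i) :=
  hN.dualNorm_le fun a ha => by
    rw [sum_inner]
    refine sum_le_sum fun i _ => ?_
    rw [real_inner_smul_left]
    calc c i * ⟪v i, a⟫ ≤ |c i| * |⟪v i, a⟫| := by rw [← abs_mul]; exact le_abs_self _
      _ ≤ |c i| * dualNorm N (v i) := by gcongr; exact hN.abs_inner_le_dualNorm _ ha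

end IsNorm

end DualNorm

theorem le_of_forall_one_sub_mul_le {c d : ℝ} (h : ∀ θ : ℝ, 0 < θ → θ < 1 → (1 - θ) * c ≤ d) :
    c ≤ d := by
  have hcont : Continuous fun θ : ℝ => (1 - θ) * c := by fun_prop
  have hlim : Tendsto (fun θ : ℝ => (1 - θ) * c) (𝓝[>] 0) (𝓝 c) := by
    simpa using (hcont.tendsto 0).mono_left nhdsWithin_le_nhds
  refine le_of_tendsto hlim ?_
  filter_upwards [Ioo_mem_nhdsGT one_pos] with θ hθ using h θ hθ.1 hθ.2

section RegularizedProjection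

variable {E : Type*} [NormedAddCommGroup E] [InnerProductSpace ℝ E] {N : E → ℝ}
  {X : Set E} (hXcv : Convex ℝ X) {ψ : E → ℝ}
  (hψ : ∀ (a b : E) (θ : ℝ), 0 ≤ θ → θ ≤ 1 →
    ψ (θ • a + (1 - θ) • b) ≤ θ * ψ a + (1 - θ) * ψ b - θ * (1 - θ) / 2 * (N (a - b)) ^ 2)
  {α : ℝ} (hα : 0 < α) {Proj : E → E} (hProjX : ∀ z, Proj z ∈ X)
  (hProjMin : ∀ z, ∀ u ∈ X, ⟪z, Proj z⟫ + (1 / α) * ψ (Proj z) ≤ ⟪z, u⟫ + (1 / α) * ψ u)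
include hXcv hψ hα hProjX hProjMin

theorem proj_quadratic_growth (z : E) {u : E} (hu : u ∈ X) :
    N (u - Proj z) ^ 2 / (2 * α)
      ≤ (⟪z, u⟫ + (1 / α) * ψ u) - (⟪z, Proj z⟫ + (1 / α) * ψ (Proj z)) := by
  -- compare `Proj z` with `θ • u + (1 - θ) • Proj z` and let `θ → 0`
  refine le_of_forall_one_sub_mul_le fun θ hθ0 hθ1 => le_of_mul_le_mul_left ?_ hθ0
  have hmin := hProjMin z _ (hXcv hu (hProjX z) hθ0.le (sub_nonneg.2 hθ1.le) (by ring))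
  have hψθ := mul_le_mul_of_nonneg_left (hψ u (Proj z) θ hθ0.le hθ1.le)
    (one_div_nonneg.2 hα.le)
  rw [inner_add_right, real_inner_smul_right, real_inner_smul_right] at hmin
  linear_combination hmin + hψθ

theorem proj_lipschitz (hN : IsNorm N) [FiniteDimensional ℝ E] (z z' : E) :
    N (Proj z - Proj z') ≤ α * dualNorm N (z - z') := by
  have h₁ := proj_quadratic_growth hXcv hψ hα hProjX hProjMin z (hProjX z')
  have h₂ := proj_quadratic_growth hXcv hψ hα hProjX hProjMin z' (hProjX z)
  have hCS := hN.inner_le_dualNorm_mul (z - z') (Proj z' - Proj z)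
  rw [hN.sub_comm] at h₁ hCS
  set d := N (Proj z - Proj z')
  have hinner : ⟪z - z', Proj z' - Proj z⟫
      = ⟪z, Proj z'⟫ - ⟪z, Proj z⟫ - (⟪z', Proj z'⟫ - ⟪z', Proj z⟫) := by
    simp only [inner_sub_left, inner_sub_right]; ring
  have hsq : d ^ 2 ≤ α * dualNorm N (z - z') * d := by
    have : d ^ 2 / α ≤ dualNorm N (z - z') * d := by
      have e : d ^ 2 / α = d ^ 2 / (2 * α) + d ^ 2 / (2 * α) := by field_simp; ring
      linarith
    rw [div_le_iff₀ hα] at this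
    linarith
  have hd : 0 ≤ d := hN.nonneg _
  nlinarith [mul_nonneg hα.le (hN.dualNorm_nonneg (z - z'))]

end RegularizedProjection

section Gradient

variable {E : Type*} [NormedAddCommGroup E] [InnerProductSpace ℝ E] [CompleteSpace E]

theorem ConvexOn.add_inner_le_of_hasGradientAt {f : E → ℝ} (hf : ConvexOn ℝ Set.univ f)
    {g a : E} (hg : HasGradientAt f g a) (b : E) : f a + ⟪g, b - a⟫ ≤ f b := by
  have hφ : ConvexOn ℝ Set.univ (f ∘ AffineMap.lineMap (k := ℝ) a b) := by
    simpa using hf.comp_affineMap (AffineMap.lineMap a b)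
  have hφ' : HasDerivAt (f ∘ AffineMap.lineMap (k := ℝ) a b) ⟪g, b - a⟫ 0 := by
    have hfa := hg.hasFDerivAt
    rw [← AffineMap.lineMap_apply_zero (k := ℝ) a b] at hfa
    simpa using hfa.comp_hasDerivAt (0 : ℝ) AffineMap.hasDerivAt_lineMap
  have := hφ.le_slope_of_hasDerivWithinAt_Ioi (Set.mem_univ 0) (Set.mem_univ 1) one_pos
    hφ'.hasDerivWithinAt
  simp only [slope_def_field, Function.comp_apply, AffineMap.lineMap_apply_one,
    AffineMap.lineMap_apply_zero, sub_zero, div_one] at this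
  linarith

theorem IsNorm.sub_le_mul_of_hasGradientAt [FiniteDimensional ℝ E] {N : E → ℝ} (hN : IsNorm N)
    {f : E → ℝ} (hf : ConvexOn ℝ Set.univ f) {g a : E} (hg : HasGradientAt f g a) {L : ℝ}
    (hgL : dualNorm N g ≤ L) (b : E) : f a - f b ≤ L * N (a - b) := by
  have h₁ := hf.add_inner_le_of_hasGradientAt hg b
  have h₂ := hN.inner_le_dualNorm_mul g (a - b)
  have h₃ := mul_le_mul_of_nonneg_right hgL (hN.nonneg (a - b))
  rw [← neg_sub a b, inner_neg_right] at h₁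
  linarith

end Gradient

theorem Matrix.vecMul_pow_eq_self {ι R : Type*} [Fintype ι] [DecidableEq ι] [Semiring R]
    {P : Matrix ι ι R} {π : ι → R} (h : π ᵥ* P = π) (k : ℕ) : π ᵥ* (P ^ k) = π := by
  induction k with
  | zero => simp
  | succ k ih => rw [pow_succ, ← Matrix.vecMul_vecMul, ih, h]

theorem pow_div_le_rpow_pow_div {γ : ℝ} (hγ0 : 0 < γ) (hγ1 : γ ≤ 1) {ν : ℕ} (hν : 0 < ν)
    (k : ℕ) : γ ^ (k / ν) ≤ (γ ^ ((1 : ℝ) / (ν : ℝ))) ^ k / γ := by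
  rw [le_div_iff₀ hγ0, ← pow_succ, ← Real.rpow_natCast, ← Real.rpow_natCast,
    ← Real.rpow_mul hγ0.le]
  refine Real.rpow_le_rpow_of_exponent_ge hγ0 hγ1 ?_
  have hk : (k : ℝ) < (k / ν : ℕ) * ν + ν := by exact_mod_cast Nat.lt_div_mul_add hν
  have hν' : (0 : ℝ) < ν := by exact_mod_cast hν
  rw [one_div_mul_eq_div, div_le_iff₀ hν']
  push_cast
  linarith

theorem sum_Ico_pow_div_le {γ : ℝ} (hγ0 : 0 < γ) (hγ1 : γ < 1) {ν : ℕ} (hν : 0 < ν) (t : ℕ) :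
    ∑ k ∈ Ico 1 t, γ ^ (k / ν) ≤ 1 / (γ * (1 - γ ^ ((1 : ℝ) / (ν : ℝ)))) := by
  set q := γ ^ ((1 : ℝ) / (ν : ℝ))
  have hq0 : 0 ≤ q := by positivity
  have hq1 : q < 1 := Real.rpow_lt_one hγ0.le hγ1 (by positivity)
  calc ∑ k ∈ Ico 1 t, γ ^ (k / ν) ≤ ∑ k ∈ Ico 1 t, q ^ k / γ :=
        sum_le_sum fun k _ => pow_div_le_rpow_pow_div hγ0 hγ1.le hν k
    _ = (∑ k ∈ Ico 1 t, q ^ k) / γ := (sum_div _ _ _).symm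
    _ ≤ q ^ 1 / (1 - q) / γ := by gcongr; exact geom_sum_Ico_le_of_lt_one hq0 hq1
    _ ≤ 1 / (γ * (1 - q)) := by
        rw [pow_one, div_div, mul_comm]
        gcongr

section Network

variable {n : ℕ}

theorem sum_abs_pow_sub_le {P : Matrix (Fin n) (Fin n) ℝ} {π : Fin n → ℝ}
    (hπ : ∀ j, 0 ≤ π j) (hπsum : ∑ j, π j = 1) {γ : ℝ} (hγ0 : 0 < γ) (hγ1 : γ < 1) {ν : ℕ}
    (hν : 0 < ν) (hmix : ∀ k : ℕ, 1 ≤ k → ∀ i j, |(P ^ k) i j - π j| ≤ γ ^ (k / ν))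
    (i : Fin n) (t : ℕ) :
    ∑ k ∈ range t, ∑ j, |(P ^ k) i j - π j|
      ≤ (n : ℝ) / (γ * (1 - γ ^ ((1 : ℝ) / (ν : ℝ)))) + 2 := by
  have hq1 : γ ^ ((1 : ℝ) / (ν : ℝ)) < 1 := Real.rpow_lt_one hγ0.le hγ1 (by positivity)
  rcases Nat.eq_zero_or_pos t with rfl | ht
  · have : 0 < γ * (1 - γ ^ ((1 : ℝ) / (ν : ℝ))) := mul_pos hγ0 (by linarith)
    simp only [range_zero, sum_empty]
    positivity
  have hzero : ∑ j, |(P ^ 0) i j - π j| ≤ 2 := by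
    calc ∑ j, |(P ^ 0) i j - π j| ≤ ∑ j, (|(1 : Matrix (Fin n) (Fin n) ℝ) i j| + |π j|) :=
          sum_le_sum fun j _ => pow_zero P ▸ abs_sub _ _
      _ = 2 := by
          simp only [sum_add_distrib, abs_of_nonneg (hπ _), hπsum, Matrix.one_apply, apply_ite,
            abs_one, abs_zero, sum_ite_eq, mem_univ, if_true]
          norm_num
  have hpos : ∑ k ∈ Ico 1 t, ∑ j, |(P ^ k) i j - π j|
      ≤ (n : ℝ) / (γ * (1 - γ ^ ((1 : ℝ) / (ν : ℝ)))) := by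
    calc ∑ k ∈ Ico 1 t, ∑ j, |(P ^ k) i j - π j| ≤ ∑ k ∈ Ico 1 t, (n : ℝ) * γ ^ (k / ν) := by
          refine sum_le_sum fun k hk => ?_
          simpa using sum_le_sum fun j (_ : j ∈ univ) => hmix k (mem_Ico.1 hk).1 i j
      _ ≤ (n : ℝ) * (1 / (γ * (1 - γ ^ ((1 : ℝ) / (ν : ℝ))))) := by
          rw [← mul_sum]; gcongr; exact sum_Ico_pow_div_le hγ0 hγ1 hν t
      _ = _ := by ring
  rw [range_eq_Ico, sum_eq_sum_Ico_succ_bot ht]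
  linarith

variable {E : Type*}

theorem eq_sum_pow_smul_of_rec [AddCommGroup E] [Module ℝ E] (P : Matrix (Fin n) (Fin n) ℝ)
    {g y : Fin n → ℕ → E} (hy0 : ∀ i, y i 0 = 0)
    (hyrec : ∀ i t, y i (t + 1) = (∑ j, P i j • y j t) + g i t) (t : ℕ) (i : Fin n) :
    y i t = ∑ s ∈ range t, ∑ j, (P ^ (t - 1 - s)) i j • g j s := by
  induction t generalizing i with
  | zero => simp [hy0]
  | succ t ih =>
    rw [hyrec, sum_range_succ]
    simp only [Nat.add_sub_cancel, Nat.sub_self, pow_zero, Matrix.one_apply, ite_smul, one_smul,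
      zero_smul, sum_ite_eq, mem_univ, if_true]
    congr 1
    simp_rw [ih, smul_sum, smul_smul]
    rw [sum_comm]
    refine sum_congr rfl fun s hs => ?_
    rw [sum_comm]
    refine sum_congr rfl fun k _ => ?_
    rw [← sum_smul, show t - s = (t - 1 - s) + 1 by have := mem_range.1 hs; omega, pow_succ',
      Matrix.mul_apply]

theorem sub_sum_smul_eq_sum_of_rec [AddCommGroup E] [Module ℝ E] {P : Matrix (Fin n) (Fin n) ℝ}
    {π : Fin n → ℝ} (hπ : π ᵥ* P = π) {g y : Fin n → ℕ → E} (hy0 : ∀ i, y i 0 = 0)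
    (hyrec : ∀ i t, y i (t + 1) = (∑ j, P i j • y j t) + g i t) (t : ℕ) (i : Fin n) :
    y i t - ∑ i', π i' • y i' t = ∑ s ∈ range t, ∑ j, ((P ^ (t - 1 - s)) i j - π j) • g j s := by
  have hbar : ∑ i', π i' • y i' t = ∑ s ∈ range t, ∑ j, π j • g j s := by
    simp_rw [eq_sum_pow_smul_of_rec P hy0 hyrec t, smul_sum, smul_smul]
    rw [sum_comm]
    refine sum_congr rfl fun s _ => ?_
    rw [sum_comm]
    refine sum_congr rfl fun j _ => ?_
    rw [← sum_smul]
    congr 1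
    exact congrFun (Matrix.vecMul_pow_eq_self hπ (t - 1 - s)) j
  rw [hbar, eq_sum_pow_smul_of_rec P hy0 hyrec t, ← sum_sub_distrib]
  simp_rw [← sum_sub_distrib, sub_smul]

theorem IsNorm.dualNorm_sub_sum_smul_le [NormedAddCommGroup E] [InnerProductSpace ℝ E]
    [FiniteDimensional ℝ E] {N : E → ℝ} (hN : IsNorm N) {P : Matrix (Fin n) (Fin n) ℝ}
    {π : Fin n → ℝ} (hπ : π ᵥ* P = π) {g y : Fin n → ℕ → E} (hy0 : ∀ i, y i 0 = 0)
    (hyrec : ∀ i t, y i (t + 1) = (∑ j, P i j • y j t) + g i t) {L : ℝ} {t : ℕ}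
    (hg : ∀ j, ∀ s < t, dualNorm N (g j s) ≤ L) (i : Fin n) :
    dualNorm N (y i t - ∑ i', π i' • y i' t) ≤ L * ∑ k ∈ range t, ∑ j, |(P ^ k) i j - π j| := by
  rw [sub_sum_smul_eq_sum_of_rec hπ hy0 hyrec]
  calc _ ≤ ∑ s ∈ range t, ∑ j, |(P ^ (t - 1 - s)) i j - π j| * dualNorm N (g j s) :=
        (hN.dualNorm_sum_le _ _).trans (sum_le_sum fun s _ => hN.dualNorm_sum_smul_le _ _ _)
    _ ≤ ∑ s ∈ range t, ∑ j, |(P ^ (t - 1 - s)) i j - π j| * L := by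
        gcongr with s hs j
        exact hg j s (mem_range.1 hs)
    _ = L * ∑ k ∈ range t, ∑ j, |(P ^ k) i j - π j| := by
        rw [← sum_range_reflect (fun k => ∑ j, |(P ^ k) i j - π j|) t, mul_sum]
        simp_rw [mul_sum, mul_comm L]

end Network

theorem one_div_mul_sum_sub_le {n : ℕ} (hn : 1 ≤ n) {a b : Fin n → ℝ} {B : ℝ}
    (h : ∀ i, a i - b i ≤ B) : 1 / (n : ℝ) * ∑ i, a i - 1 / (n : ℝ) * ∑ i, b i ≤ B := by
  have hn' : (0 : ℝ) < n := by exact_mod_cast hn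
  rw [← mul_sub, ← sum_sub_distrib, one_div_mul_eq_div, div_le_iff₀ hn']
  simpa [mul_comm] using sum_le_card_nsmul univ _ B fun i _ => h i

theorem dodwda_network_dynamic_regret_general {m : ℕ} (n T : ℕ) (hn : 1 ≤ n) (hT : 1 ≤ T)
    (β α : ℝ) (hβ : 0 < β) (hα : α = β / T)
    -- `P` is row-stochastic with stationary distribution `π ∈ (0,1)^n`
    (P : Matrix (Fin n) (Fin n) ℝ)
    (π : Fin n → ℝ) (hπ0 : ∀ i, 0 < π i)
    (hπsum : ∑ i, π i = 1) (hπstat : ∀ j, ∑ i, π i * P i j = π j)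
    -- geometric mixing of the matrix powers of `P` (`k / ν` is `⌊k/ν⌋`)
    (γ : ℝ) (hγ0 : 0 < γ) (hγ1 : γ < 1) (ν : ℕ) (hν : 1 ≤ ν)
    (hmix : ∀ k : ℕ, 1 ≤ k → ∀ i j, |(P ^ k) i j - π j| ≤ γ ^ (k / ν))
    -- `X` is nonempty, compact, and convex
    (X : Set (EuclideanSpace ℝ (Fin m)))
    (hXcv : Convex ℝ X)
    -- `N` is a norm on `ℝ^m` and `Nd` its dual norm
    (N : EuclideanSpace ℝ (Fin m) → ℝ)
    (hNtri : ∀ a b, N (a + b) ≤ N a + N b)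
    (hNsmul : ∀ (c : ℝ) (a : EuclideanSpace ℝ (Fin m)), N (c • a) = |c| * N a)
    (hNdef : ∀ a, N a = 0 ↔ a = 0)
    (Nd : EuclideanSpace ℝ (Fin m) → ℝ)
    (hNd : ∀ v, Nd v = sSup {r : ℝ | ∃ a, N a ≤ 1 ∧ r = ⟪v, a⟫})
    -- `ψ` is 1-strongly convex with respect to `N`
    (ψ : EuclideanSpace ℝ (Fin m) → ℝ)
    (hψ : ∀ (a b : EuclideanSpace ℝ (Fin m)) (θ : ℝ), 0 ≤ θ → θ ≤ 1 →
      ψ (θ • a + (1 - θ) • b) ≤ θ * ψ a + (1 - θ) * ψ b - θ * (1 - θ) / 2 * (N (a - b)) ^ 2)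
    -- `Proj` is the `ψ`-regularized projection onto `X` with stepsize `α`
    (Proj : EuclideanSpace ℝ (Fin m) → EuclideanSpace ℝ (Fin m))
    (hProjX : ∀ z, Proj z ∈ X)
    (hProjMin : ∀ z, ∀ u ∈ X,
      ⟪z, Proj z⟫ + (1 / α) * ψ (Proj z) ≤ ⟪z, u⟫ + (1 / α) * ψ u)
    -- the losses: convex, differentiable, with dual-norm-bounded gradients on `X`
    (L : ℝ)
    (f : Fin n → ℕ → EuclideanSpace ℝ (Fin m) → ℝ)
    (grad : Fin n → ℕ → EuclideanSpace ℝ (Fin m) → EuclideanSpace ℝ (Fin m))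
    (hconv : ∀ (i : Fin n) (t : ℕ), t ≤ T + 1 → ConvexOn ℝ Set.univ (f i t))
    (hdiff : ∀ (i : Fin n) (t : ℕ), t ≤ T + 1 → ∀ z, HasGradientAt (f i t) (grad i t z) z)
    (hgradbd : ∀ (i : Fin n) (t : ℕ), t ≤ T + 1 → ∀ z ∈ X, Nd (grad i t z) ≤ L)
    -- the D-ODWDA iterates
    (y x : Fin n → ℕ → EuclideanSpace ℝ (Fin m))
    (hy0 : ∀ i, y i 0 = 0) (hx0 : ∀ i, x i 0 ∈ X)
    (hyrec : ∀ i t, y i (t + 1) = (∑ j, P i j • y j t) + grad i t (x i t))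
    (hxrec : ∀ i t, x i (t + 1) = Proj (y i (t + 1)))
    -- the weighted dual average
    (ybar : ℕ → EuclideanSpace ℝ (Fin m))
    (hybar : ∀ t, ybar t = ∑ i, π i • y i t)
    -- `x*_t` minimizes `f_t = (1/n) Σ_i f_{i,t}` over `X`
    (xstar : ℕ → EuclideanSpace ℝ (Fin m))
    (hxstarX : ∀ t : ℕ, 1 ≤ t → t ≤ T + 1 → xstar t ∈ X)
    -- (i) a uniform bound on `‖ȳ_t‖_*`
    (D : ℝ)
    (hybarbd : ∀ t : ℕ, 1 ≤ t → t ≤ T → Nd (ybar t) ≤ D)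
    -- (ii) dual representatives of the round optima, dual-norm-bounded by `Y`
    (Y : ℝ)
    (hYstar : ∀ (i : Fin n) (t : ℕ), 2 ≤ t → t ≤ T + 1 →
      ∃ ystar : EuclideanSpace ℝ (Fin m), xstar t = Proj ystar ∧ Nd ystar ≤ Y) :
    -- the network dynamic regret bound
    ∑ t ∈ Icc 1 T,
        ((1 / (n : ℝ)) * ∑ i, f i t (x i t) - (1 / (n : ℝ)) * ∑ i, f i t (xstar t))
      ≤ β * L ^ 2 * ((n : ℝ) / (γ * (1 - γ ^ ((1 : ℝ) / (ν : ℝ)))) + 2)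
        + β * L * (D + Y)
        + L * ∑ t ∈ Icc 1 T, N (xstar (t + 1) - xstar t) := by
  obtain rfl : Nd = dualNorm N := funext hNd
  have hN : IsNorm N := ⟨hNtri, hNsmul, hNdef⟩
  have hα0 : 0 < α := hα ▸ div_pos hβ (by exact_mod_cast hT)
  have hL : 0 ≤ L := (hN.dualNorm_nonneg _).trans
    (hgradbd ⟨0, hn⟩ 1 (by omega) _ (hxstarX 1 le_rfl (by omega)))
  have hxX : ∀ i t, x i t ∈ X := fun i t => by
    cases t with
    | zero => exact hx0 i
    | succ t => exact hxrec i t ▸ hProjX _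
  set C := L * ((n : ℝ) / (γ * (1 - γ ^ ((1 : ℝ) / (ν : ℝ)))) + 2) with hC
  have hcons : ∀ t ≤ T, ∀ i, dualNorm N (y i t - ybar t) ≤ C := fun t ht i => by
    rw [hybar]
    refine (hN.dualNorm_sub_sum_smul_le (funext hπstat) hy0 hyrec
      (fun j s hs => hgradbd j s (by omega) _ (hxX j s)) i).trans ?_
    exact mul_le_mul_of_nonneg_left
      (sum_abs_pow_sub_le (fun j => (hπ0 j).le) hπsum hγ0 hγ1 hν hmix i t) hL
  have hclose : ∀ t ∈ Icc 1 T, ∀ τ, 2 ≤ τ → τ ≤ T + 1 → ∀ i,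
      N (x i t - xstar τ) ≤ α * (C + D + Y) := by
    intro t ht τ hτ2 hτ i
    obtain ⟨ht1, htT⟩ := mem_Icc.1 ht
    obtain ⟨ystar, hxs, hYs⟩ := hYstar i τ hτ2 hτ
    obtain ⟨s, rfl⟩ : ∃ s, t = s + 1 := ⟨t - 1, by omega⟩
    rw [hxrec, hxs]
    refine (proj_lipschitz hXcv hψ hα0 hProjX hProjMin hN _ _).trans
      (mul_le_mul_of_nonneg_left ?_ hα0.le)
    rw [← sub_add_sub_cancel _ (ybar (s + 1))]
    linarith [hN.dualNorm_add_le (y i (s + 1) - ybar (s + 1)) (ybar (s + 1) - ystar),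
      hN.dualNorm_sub_le (ybar (s + 1)) ystar, hcons _ htT i, hybarbd _ ht1 htT]
  have hround : ∀ t ∈ Icc 1 T, ∀ i, f i t (x i t) - f i t (xstar t)
      ≤ L * (α * (C + D + Y)) + L * N (xstar (t + 1) - xstar t) := by
    intro t ht i
    obtain ⟨ht1, htT⟩ := mem_Icc.1 ht
    have hfi := fun z hz => hN.sub_le_mul_of_hasGradientAt (hconv i t (by omega))
      (hdiff i t (by omega) z) (hgradbd i t (by omega) z hz)
    have hV : 0 ≤ L * N (xstar (t + 1) - xstar t) := mul_nonneg hL (hN.nonneg _)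
    rcases ht1.eq_or_lt with rfl | ht2
    · have h₁ := hfi _ (hxX i 1) (xstar 2)
      have h₂ := hfi _ (hxstarX 2 (by omega) (by omega)) (xstar 1)
      have h₃ := mul_le_mul_of_nonneg_left (hclose 1 ht 2 le_rfl (by omega) i) hL
      linarith
    · have h₁ := hfi _ (hxX i t) (xstar t)
      have h₂ := mul_le_mul_of_nonneg_left (hclose t ht t ht2 (by omega) i) hL
      linarith
  calc _ ≤ ∑ t ∈ Icc 1 T, (L * (α * (C + D + Y)) + L * N (xstar (t + 1) - xstar t)) :=
        sum_le_sum fun t ht => one_div_mul_sum_sub_le hn (hround t ht)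
    _ = _ := by
        have hT0 : (T : ℝ) ≠ 0 := by positivity
        rw [sum_add_distrib, sum_const, Nat.card_Icc, Nat.add_sub_cancel, nsmul_eq_mul, ← mul_sum,
          hα, hC]
        field_simp
        ring

/-- **Theorem 1 (network dynamic regret bound for D-ODWDA).**
Under the stated assumptions on the network matrix `P` (row-stochastic, stationary
distribution `π ∈ (0,1)^n`, geometric mixing with constants `γ ∈ (0,1)` and `ν ≥ 1`),
the decision set `X` (nonempty, compact, convex), the regularizer `ψ` (1-strongly convex
w.r.t. the norm `N` with dual norm `Nd`), the losses `f_{i,t}` (convex, differentiable,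
with gradients dual-norm-bounded by `L` on `X`), the D-ODWDA iterates with constant
stepsize `α = β/T`, a uniform bound `D` on `‖ȳ_t‖_*`, and a bound `Y` on dual
representatives of the round optima `x*_t`, the network dynamic regret satisfies
`R_T ≤ βL²(n/(γ(1 − γ^{1/ν})) + 2) + βL(D + Y) + L·V_T`. -/
theorem dodwda_network_dynamic_regret {m : ℕ} (n T : ℕ) (hn : 1 ≤ n) (hT : 1 ≤ T)
    (β α : ℝ) (hβ : 0 < β) (hα : α = β / T)
    -- `P` is row-stochastic with stationary distribution `π ∈ (0,1)^n`
    (P : Matrix (Fin n) (Fin n) ℝ)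
    (hPnn : ∀ i j, 0 ≤ P i j) (hProw : ∀ i, ∑ j, P i j = 1)
    (π : Fin n → ℝ) (hπ0 : ∀ i, 0 < π i) (hπ1 : ∀ i, π i < 1)
    (hπsum : ∑ i, π i = 1) (hπstat : ∀ j, ∑ i, π i * P i j = π j)
    -- geometric mixing of the matrix powers of `P` (`k / ν` is `⌊k/ν⌋`)
    (γ : ℝ) (hγ0 : 0 < γ) (hγ1 : γ < 1) (ν : ℕ) (hν : 1 ≤ ν)
    (hmix : ∀ k : ℕ, 1 ≤ k → ∀ i j, |(P ^ k) i j - π j| ≤ γ ^ (k / ν))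
    -- `X` is nonempty, compact, and convex
    (X : Set (EuclideanSpace ℝ (Fin m)))
    (hXne : X.Nonempty) (hXcp : IsCompact X) (hXcv : Convex ℝ X)
    -- `N` is a norm on `ℝ^m` and `Nd` its dual norm
    (N : EuclideanSpace ℝ (Fin m) → ℝ)
    (hNtri : ∀ a b, N (a + b) ≤ N a + N b)
    (hNsmul : ∀ (c : ℝ) (a : EuclideanSpace ℝ (Fin m)), N (c • a) = |c| * N a)
    (hNdef : ∀ a, N a = 0 ↔ a = 0)
    (Nd : EuclideanSpace ℝ (Fin m) → ℝ)
    (hNd : ∀ v, Nd v = sSup {r : ℝ | ∃ a, N a ≤ 1 ∧ r = ⟪v, a⟫})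
    -- `ψ` is 1-strongly convex with respect to `N`
    (ψ : EuclideanSpace ℝ (Fin m) → ℝ)
    (hψ : ∀ (a b : EuclideanSpace ℝ (Fin m)) (θ : ℝ), 0 ≤ θ → θ ≤ 1 →
      ψ (θ • a + (1 - θ) • b) ≤ θ * ψ a + (1 - θ) * ψ b - θ * (1 - θ) / 2 * (N (a - b)) ^ 2)
    -- `Proj` is the `ψ`-regularized projection onto `X` with stepsize `α`
    (Proj : EuclideanSpace ℝ (Fin m) → EuclideanSpace ℝ (Fin m))
    (hProjX : ∀ z, Proj z ∈ X)
    (hProjMin : ∀ z, ∀ u ∈ X,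
      ⟪z, Proj z⟫ + (1 / α) * ψ (Proj z) ≤ ⟪z, u⟫ + (1 / α) * ψ u)
    -- the losses: convex, differentiable, with dual-norm-bounded gradients on `X`
    (L : ℝ)
    (f : Fin n → ℕ → EuclideanSpace ℝ (Fin m) → ℝ)
    (grad : Fin n → ℕ → EuclideanSpace ℝ (Fin m) → EuclideanSpace ℝ (Fin m))
    (hconv : ∀ (i : Fin n) (t : ℕ), t ≤ T + 1 → ConvexOn ℝ Set.univ (f i t))
    (hdiff : ∀ (i : Fin n) (t : ℕ), t ≤ T + 1 → ∀ z, HasGradientAt (f i t) (grad i t z) z)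
    (hgradbd : ∀ (i : Fin n) (t : ℕ), t ≤ T + 1 → ∀ z ∈ X, Nd (grad i t z) ≤ L)
    -- the D-ODWDA iterates
    (y x : Fin n → ℕ → EuclideanSpace ℝ (Fin m))
    (hy0 : ∀ i, y i 0 = 0) (hx0 : ∀ i, x i 0 ∈ X)
    (hyrec : ∀ i t, y i (t + 1) = (∑ j, P i j • y j t) + grad i t (x i t))
    (hxrec : ∀ i t, x i (t + 1) = Proj (y i (t + 1)))
    -- the weighted dual average
    (ybar : ℕ → EuclideanSpace ℝ (Fin m))
    (hybar : ∀ t, ybar t = ∑ i, π i • y i t)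
    -- `x*_t` minimizes `f_t = (1/n) Σ_i f_{i,t}` over `X`
    (xstar : ℕ → EuclideanSpace ℝ (Fin m))
    (hxstarX : ∀ t : ℕ, 1 ≤ t → t ≤ T + 1 → xstar t ∈ X)
    (hxstarMin : ∀ t : ℕ, 1 ≤ t → t ≤ T + 1 → ∀ u ∈ X,
      (1 / (n : ℝ)) * ∑ i, f i t (xstar t) ≤ (1 / (n : ℝ)) * ∑ i, f i t u)
    -- (i) a uniform bound on `‖ȳ_t‖_*`
    (D : ℝ) (hD : 0 ≤ D)
    (hybarbd : ∀ t : ℕ, 1 ≤ t → t ≤ T → Nd (ybar t) ≤ D)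
    -- (ii) dual representatives of the round optima, dual-norm-bounded by `Y`
    (Y : ℝ) (hY : 0 ≤ Y)
    (hYstar : ∀ (i : Fin n) (t : ℕ), 2 ≤ t → t ≤ T + 1 →
      ∃ ystar : EuclideanSpace ℝ (Fin m), xstar t = Proj ystar ∧ Nd ystar ≤ Y) :
    -- the network dynamic regret bound
    ∑ t ∈ Icc 1 T,
        ((1 / (n : ℝ)) * ∑ i, f i t (x i t) - (1 / (n : ℝ)) * ∑ i, f i t (xstar t))
      ≤ β * L ^ 2 * ((n : ℝ) / (γ * (1 - γ ^ ((1 : ℝ) / (ν : ℝ)))) + 2)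
        + β * L * (D + Y)
        + L * ∑ t ∈ Icc 1 T, N (xstar (t + 1) - xstar t) :=
  dodwda_network_dynamic_regret_general n T hn hT β α hβ hα P π hπ0 hπsum hπstat γ hγ0 hγ1 ν hν hmix
    X hXcv N hNtri hNsmul hNdef Nd hNd ψ hψ Proj hProjX hProjMin L f grad hconv hdiff hgradbd y x
    hy0 hx0 hyrec hxrec ybar hybar xstar hxstarX D hybarbd Y hYstar
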